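/- arXiv:2502.03691 — 5 statements merged into one kernel-verified Lean document; each statement's English description precedes it below -/
import Mathlib

section
/- A functional E : L²(X,m) → [0,∞] satisfies the Bénilan–Picard inequality E(u - p∘(u-v)) + E(v + p∘(u-v)) ≤ E(u) + E(v) for all u,v and all increasing normal contractions p if and only if E is compatible with all normal contractions, i.e. E(f + C∘g) + E(f - C∘g) ≤ E(f+g) + E(f-g) for all f,g and all normal contractions C. -/
open MeasureTheory ENNReal

theorem benilanPicard_iff_contractionProperty {X : Type*} [MeasurableSpace X]
    (μ : Measure X) (E : Lp ℝ 2 μ → ℝ≥0∞) :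
    (∀ (p : ℝ → ℝ) (hp : LipschitzWith 1 p) (hp0 : p 0 = 0), Monotone p →
      ∀ u v : Lp ℝ 2 μ,
        E (u - hp.compLp hp0 (u - v)) + E (v + hp.compLp hp0 (u - v)) ≤ E u + E v)
    ↔
    (∀ (C : ℝ → ℝ) (hC : LipschitzWith 1 C) (hC0 : C 0 = 0),
      ∀ f g : Lp ℝ 2 μ,
        E (f + hC.compLp hC0 g) + E (f - hC.compLp hC0 g) ≤ E (f + g) + E (f - g)) := by
  constructor
  · -- BP → contraction property
    intro h C hC hC0 f g
    set p : ℝ → ℝ := fun x => x / 2 - C (x / 2) with hpdef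
    have hbound : ∀ x y : ℝ, |C (x / 2) - C (y / 2)| ≤ |x - y| / 2 := by
      intro x y
      have := hC.dist_le_mul (x / 2) (y / 2)
      simp only [Real.dist_eq, NNReal.coe_one, one_mul] at this
      calc |C (x / 2) - C (y / 2)| ≤ |x / 2 - y / 2| := this
        _ = |x - y| / 2 := by rw [show x / 2 - y / 2 = (x - y) / 2 by ring, abs_div]; simp
    have hp : LipschitzWith 1 p := by
      apply LipschitzWith.of_dist_le_mul
      intro x y
      simp only [Real.dist_eq, NNReal.coe_one, one_mul, hpdef]
      obtain ⟨h1, h2⟩ := abs_le.mp (hbound x y)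
      have h3 := le_abs_self (x - y)
      have h4 := neg_abs_le (x - y)
      rw [abs_le]
      constructor <;> linarith
    have hp0 : p 0 = 0 := by simp [hpdef, hC0]
    have hmono : Monotone p := by
      intro x y hxy
      obtain ⟨h1, h2⟩ := abs_le.mp (hbound y x)
      have : |y - x| = y - x := abs_of_nonneg (by linarith)
      simp only [hpdef]
      rw [this] at h1 h2
      linarith
    have key := h p hp hp0 hmono (f + g) (f - g)
    have e1 : (f + g) - hp.compLp hp0 ((f + g) - (f - g)) = f + hC.compLp hC0 g := by
      apply Lp.ext
      filter_upwards [Lp.coeFn_add f g, Lp.coeFn_sub f g,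
        Lp.coeFn_sub (f + g) (hp.compLp hp0 ((f + g) - (f - g))),
        Lp.coeFn_add f (hC.compLp hC0 g),
        hp.coeFn_compLp hp0 ((f + g) - (f - g)),
        Lp.coeFn_sub (f + g) (f - g), hC.coeFn_compLp hC0 g] with a ha hs h1 h2 h3 h4 h5
      simp only [Pi.add_apply, Pi.sub_apply, Function.comp_apply] at ha hs h1 h2 h3 h4 h5 ⊢
      rw [h1, h2, h3, h4, ha, hs, h5, hpdef]
      simp only
      rw [show f a + g a - (f a - g a) = 2 * g a by ring,
        show (2 : ℝ) * g a / 2 = g a by ring]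
      ring
    have e2 : (f - g) + hp.compLp hp0 ((f + g) - (f - g)) = f - hC.compLp hC0 g := by
      apply Lp.ext
      filter_upwards [Lp.coeFn_add f g, Lp.coeFn_sub f g,
        Lp.coeFn_add (f - g) (hp.compLp hp0 ((f + g) - (f - g))),
        Lp.coeFn_sub f (hC.compLp hC0 g),
        hp.coeFn_compLp hp0 ((f + g) - (f - g)),
        Lp.coeFn_sub (f + g) (f - g), hC.coeFn_compLp hC0 g] with a ha hs h1 h2 h3 h4 h5
      simp only [Pi.add_apply, Pi.sub_apply, Function.comp_apply] at ha hs h1 h2 h3 h4 h5 ⊢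
      rw [h1, h2, h3, h4, ha, hs, h5, hpdef]
      simp only
      rw [show f a + g a - (f a - g a) = 2 * g a by ring,
        show (2 : ℝ) * g a / 2 = g a by ring]
      ring
    rw [e1, e2] at key
    exact key
  · -- contraction property → BP
    intro h p hp hp0 hmono u v
    set C : ℝ → ℝ := fun x => x - p (2 * x) with hCdef
    have hbound : ∀ x y : ℝ, |p (2 * x) - p (2 * y)| ≤ 2 * |x - y| := by
      intro x y
      have := hp.dist_le_mul (2 * x) (2 * y)
      simp only [Real.dist_eq, NNReal.coe_one, one_mul] at this
      calc |p (2 * x) - p (2 * y)| ≤ |2 * x - 2 * y| := this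
        _ = 2 * |x - y| := by rw [show (2:ℝ) * x - 2 * y = 2 * (x - y) by ring, abs_mul]; simp
    have hC : LipschitzWith 1 C := by
      apply LipschitzWith.of_dist_le_mul
      intro x y
      simp only [Real.dist_eq, NNReal.coe_one, one_mul, hCdef]
      rcases le_total x y with hxy | hxy
      · have hm : p (2 * x) ≤ p (2 * y) := hmono (by linarith)
        obtain ⟨h1, h2⟩ := abs_le.mp (hbound x y)
        have habs : |x - y| = -(x - y) := abs_of_nonpos (by linarith)
        rw [habs] at h1 h2
        rw [abs_le, habs]
        constructor <;> linarith
      · have hm : p (2 * y) ≤ p (2 * x) := hmono (by linarith)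
        obtain ⟨h1, h2⟩ := abs_le.mp (hbound x y)
        have habs : |x - y| = x - y := abs_of_nonneg (by linarith)
        rw [habs] at h1 h2
        rw [abs_le, habs]
        constructor <;> linarith
    have hC0 : C 0 = 0 := by simp [hCdef, hp0]
    have key := h C hC hC0 ((2⁻¹ : ℝ) • (u + v)) ((2⁻¹ : ℝ) • (u - v))
    have efp : (2⁻¹ : ℝ) • (u + v) + (2⁻¹ : ℝ) • (u - v) = u := by module
    have efm : (2⁻¹ : ℝ) • (u + v) - (2⁻¹ : ℝ) • (u - v) = v := by module
    have e1 : (2⁻¹ : ℝ) • (u + v) + hC.compLp hC0 ((2⁻¹ : ℝ) • (u - v))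
        = u - hp.compLp hp0 (u - v) := by
      apply Lp.ext
      filter_upwards [Lp.coeFn_add ((2⁻¹ : ℝ) • (u + v)) (hC.compLp hC0 ((2⁻¹ : ℝ) • (u - v))),
        Lp.coeFn_smul (2⁻¹ : ℝ) (u + v), Lp.coeFn_smul (2⁻¹ : ℝ) (u - v),
        Lp.coeFn_add u v, Lp.coeFn_sub u v,
        hC.coeFn_compLp hC0 ((2⁻¹ : ℝ) • (u - v)),
        Lp.coeFn_sub u (hp.compLp hp0 (u - v)),
        hp.coeFn_compLp hp0 (u - v)] with a h1 h2 h3 h4 h5 h6 h7 h8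
      simp only [Pi.add_apply, Pi.sub_apply, Pi.smul_apply, smul_eq_mul,
        Function.comp_apply] at h1 h2 h3 h4 h5 h6 h7 h8 ⊢
      rw [h1, h2, h6, h3, h7, h8, h5, hCdef]
      simp only [h4, h5]
      rw [show (2:ℝ) * (2⁻¹ * (u a - v a)) = u a - v a by ring]
      ring
    have e2 : (2⁻¹ : ℝ) • (u + v) - hC.compLp hC0 ((2⁻¹ : ℝ) • (u - v))
        = v + hp.compLp hp0 (u - v) := by
      apply Lp.ext
      filter_upwards [Lp.coeFn_sub ((2⁻¹ : ℝ) • (u + v)) (hC.compLp hC0 ((2⁻¹ : ℝ) • (u - v))),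
        Lp.coeFn_smul (2⁻¹ : ℝ) (u + v), Lp.coeFn_smul (2⁻¹ : ℝ) (u - v),
        Lp.coeFn_add u v, Lp.coeFn_sub u v,
        hC.coeFn_compLp hC0 ((2⁻¹ : ℝ) • (u - v)),
        Lp.coeFn_add v (hp.compLp hp0 (u - v)),
        hp.coeFn_compLp hp0 (u - v)] with a h1 h2 h3 h4 h5 h6 h7 h8
      simp only [Pi.add_apply, Pi.sub_apply, Pi.smul_apply, smul_eq_mul,
        Function.comp_apply] at h1 h2 h3 h4 h5 h6 h7 h8 ⊢
      rw [h1, h2, h6, h3, h7, h8, h5, hCdef]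
      simp only [h4, h5]
      rw [show (2:ℝ) * (2⁻¹ * (u a - v a)) = u a - v a by ring]
      ring
    rw [e1, e2, efp, efm] at key
    exact key
end

section
/- If a functional E satisfies the Bénilan–Picard inequality (⋆) for increasing normal contractions p₁ and p₂, then E satisfies (⋆) for the increasing normal contraction x ↦ p₁(x) + p₂(x - 2p₁(x)). -/
open MeasureTheory ENNReal

theorem benilanPicard_comp {X : Type*} [MeasurableSpace X] (μ : Measure X)
    (E : Lp ℝ 2 μ → ℝ≥0∞) (p₁ p₂ : ℝ → ℝ)
    (hp₁ : LipschitzWith 1 p₁) (hp₁0 : p₁ 0 = 0) (hp₁m : Monotone p₁)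
    (hp₂ : LipschitzWith 1 p₂) (hp₂0 : p₂ 0 = 0) (hp₂m : Monotone p₂)
    (hBP₁ : ∀ u v : Lp ℝ 2 μ,
      E (u - hp₁.compLp hp₁0 (u - v)) + E (v + hp₁.compLp hp₁0 (u - v)) ≤ E u + E v)
    (hBP₂ : ∀ u v : Lp ℝ 2 μ,
      E (u - hp₂.compLp hp₂0 (u - v)) + E (v + hp₂.compLp hp₂0 (u - v)) ≤ E u + E v)
    (hq : LipschitzWith 1 (fun x : ℝ => p₁ x + p₂ (x - 2 * p₁ x)))
    (hq0 : (fun x : ℝ => p₁ x + p₂ (x - 2 * p₁ x)) 0 = 0) :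
    ∀ u v : Lp ℝ 2 μ,
      E (u - hq.compLp hq0 (u - v)) + E (v + hq.compLp hq0 (u - v)) ≤ E u + E v := by
  intro u v
  set w := u - v with hw
  set a := hp₁.compLp hp₁0 w with ha
  set u' := u - a with hu'
  set v' := v + a with hv'
  set b := hp₂.compLp hp₂0 (u' - v') with hb
  have key1 : u - hq.compLp hq0 w = u' - b := by
    apply Lp.ext
    filter_upwards [Lp.coeFn_sub u (hq.compLp hq0 w), Lp.coeFn_sub u' b,
      Lp.coeFn_sub u' v', Lp.coeFn_sub u a, Lp.coeFn_add v a,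
      hq.coeFn_compLp hq0 w, hp₂.coeFn_compLp hp₂0 (u' - v'),
      hp₁.coeFn_compLp hp₁0 w, Lp.coeFn_sub u v] with x h1 h2 h3 h4 h5 h6 h7 h8 h9
    simp only [Pi.sub_apply, Pi.add_apply, Function.comp_apply] at h1 h2 h3 h4 h5 h6 h7 h8 h9
    rw [h1, h2, h6, h7, h3, h4, h5, h8, h9]
    ring
  have key2 : v + hq.compLp hq0 w = v' + b := by
    apply Lp.ext
    filter_upwards [Lp.coeFn_add v (hq.compLp hq0 w), Lp.coeFn_add v' b,
      Lp.coeFn_sub u' v', Lp.coeFn_sub u a, Lp.coeFn_add v a,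
      hq.coeFn_compLp hq0 w, hp₂.coeFn_compLp hp₂0 (u' - v'),
      hp₁.coeFn_compLp hp₁0 w, Lp.coeFn_sub u v] with x h1 h2 h3 h4 h5 h6 h7 h8 h9
    simp only [Pi.sub_apply, Pi.add_apply, Function.comp_apply] at h1 h2 h3 h4 h5 h6 h7 h8 h9
    rw [h1, h2, h6, h7, h3, h4, h5, h8, h9]
    ring
  calc E (u - hq.compLp hq0 w) + E (v + hq.compLp hq0 w)
      = E (u' - b) + E (v' + b) := by rw [key1, key2]
    _ ≤ E u' + E v' := hBP₂ u' v'
    _ ≤ E u + E v := hBP₁ u v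
end

section
/- If p₁, p₂ are increasing normal contractions, then q(x) := p₁(x) + p₂(x - 2p₁(x)) is an increasing normal contraction. -/
theorem increasing_normal_contraction_combination
    (p₁ p₂ : ℝ → ℝ) (h₁0 : p₁ 0 = 0)
    (h₁ : ∀ x y : ℝ, x ≤ y → 0 ≤ p₁ y - p₁ x ∧ p₁ y - p₁ x ≤ y - x)
    (h₂0 : p₂ 0 = 0)
    (h₂ : ∀ x y : ℝ, x ≤ y → 0 ≤ p₂ y - p₂ x ∧ p₂ y - p₂ x ≤ y - x) :
    (p₁ 0 + p₂ (0 - 2 * p₁ 0) = 0) ∧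
    ∀ x y : ℝ, x ≤ y →
      0 ≤ (p₁ y + p₂ (y - 2 * p₁ y)) - (p₁ x + p₂ (x - 2 * p₁ x)) ∧
      (p₁ y + p₂ (y - 2 * p₁ y)) - (p₁ x + p₂ (x - 2 * p₁ x)) ≤ y - x := by
  constructor
  · simp [h₁0, h₂0]
  · intro x y hxy
    obtain ⟨h1a, h1b⟩ := h₁ x y hxy
    set a := x - 2 * p₁ x with ha
    set b := y - 2 * p₁ y with hb
    rcases le_total a b with hab | hab
    · obtain ⟨h2a, h2b⟩ := h₂ a b hab
      constructor <;> nlinarith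
    · obtain ⟨h2a, h2b⟩ := h₂ b a hab
      constructor <;> nlinarith
end

section
/- Let a ≤ 0 ≤ b be finite real numbers and let 𝒞 = {(u,v) ∈ L² × L² : 2a ≤ u - v ≤ 2b a.e.}. Then for f, g ∈ L², the Hilbert-space orthogonal projection of (f+g, f-g) onto the closed convex set 𝒞 equals (f + C∘g, f - C∘g), where C(x) = a ∨ x ∧ b. -/
open MeasureTheory RealInnerProductSpace

lemma key_ptwise (a b t w : ℝ) (hab : a ≤ b) (hw1 : 2 * a ≤ w) (hw2 : w ≤ 2 * b) :
    (t - max a (min t b)) * (w - (max a (min t b) + max a (min t b))) ≤ 0 := by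
  rcases le_total t a with h | h
  · rw [min_eq_left (h.trans hab), max_eq_left h]
    nlinarith
  · rcases le_total t b with h' | h'
    · rw [min_eq_left h', max_eq_right h]
      nlinarith
    · rw [min_eq_right h', max_eq_right hab]
      nlinarith

theorem projection_onto_strip {X : Type*} [MeasurableSpace X] (μ : Measure X)
    (a b : ℝ) (ha : a ≤ 0) (hb : 0 ≤ b)
    (C : ℝ → ℝ) (hCdef : C = fun x : ℝ => max a (min x b))
    (hC : LipschitzWith 1 C) (hC0 : C 0 = 0)
    (f g : Lp ℝ 2 μ) :
    -- the candidate projection (f + C∘g, f - C∘g) lies in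
    -- 𝒞 = {(u,v) : 2a ≤ u - v ≤ 2b a.e.}
    (∀ᵐ x ∂μ,
      2 * a ≤ (f + hC.compLp hC0 g : Lp ℝ 2 μ) x - (f - hC.compLp hC0 g : Lp ℝ 2 μ) x ∧
      (f + hC.compLp hC0 g : Lp ℝ 2 μ) x - (f - hC.compLp hC0 g : Lp ℝ 2 μ) x ≤ 2 * b) ∧
    -- and satisfies the variational characterization of the orthogonal
    -- projection of (f+g, f-g) onto 𝒞 in the product Hilbert space
    (∀ u v : Lp ℝ 2 μ,
      (∀ᵐ x ∂μ, 2 * a ≤ u x - v x ∧ u x - v x ≤ 2 * b) →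
      ⟪(f + g) - (f + hC.compLp hC0 g), u - (f + hC.compLp hC0 g)⟫ +
      ⟪(f - g) - (f - hC.compLp hC0 g), v - (f - hC.compLp hC0 g)⟫ ≤ 0) := by
  have hab : a ≤ b := ha.trans hb
  set h : Lp ℝ 2 μ := hC.compLp hC0 g with hh
  have hcoe : (h : X → ℝ) =ᵐ[μ] C ∘ g := hC.coeFn_compLp hC0 g
  constructor
  · filter_upwards [Lp.coeFn_add f h, Lp.coeFn_sub f h, hcoe] with x h1 h2 h3
    rw [h1, h2, Pi.add_apply, Pi.sub_apply, h3]
    have : a ≤ C (g x) ∧ C (g x) ≤ b := by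
      subst hCdef
      exact ⟨le_max_left _ _, max_le hab (min_le_right _ _)⟩
    constructor <;> simp only [Function.comp_apply] <;> nlinarith [this.1, this.2]
  · intro u v huv
    have e1 : (f + g) - (f + h) = g - h := by abel
    have e2 : (f - g) - (f - h) = -(g - h) := by abel
    rw [e1, e2, inner_neg_left, ← sub_eq_add_neg, ← inner_sub_right]
    have e3 : (u - (f + h)) - (v - (f - h)) = (u - v) - (h + h) := by abel
    rw [e3, L2.inner_def]
    apply integral_nonpos_of_ae
    filter_upwards [Lp.coeFn_sub g h, Lp.coeFn_sub u v,
      Lp.coeFn_sub (u - v) (h + h), Lp.coeFn_add h h, hcoe, huv] with x h1 h2 h3 h4 h5 h6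
    simp only [Pi.le_def, Pi.zero_apply]
    rw [h1, h3, Pi.sub_apply, Pi.sub_apply, h4, h2, Pi.add_apply, Pi.sub_apply, h5,
      Function.comp_apply, RCLike.inner_apply]
    simp only [starRingEnd_apply, star_trivial, hCdef]
    exact (mul_comm _ _).trans_le (key_ptwise a b (g x) (u x - v x) hab h6.1 h6.2)
end

section
/- Let E : L²(X,m) → [0,∞] be lower semicontinuous and compatible with the normal contractions x ↦ |x| and C_α(x) = (-α - x) ∨ x ∧ (α - x) for all α ≥ 0. Then E is convex. -/
/-!
Compatibility with normal contractions is preserved under composition and, as `E` is lower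
semicontinuous, under pointwise limits (by dominated convergence in `L²`). Since `C_{2β}` maps
`[-3β, 3β]` into `[-β, β]`, the compositions `Dₙ = C_{2·3^{-n}} ∘ ⋯ ∘ C_{2·3^n}` tend pointwise
to `0`, so `E` is compatible with the zero contraction: `E f + E f ≤ E (f + g) + E (f - g)`.
This is midpoint convexity, and lower semicontinuity extends it from dyadic to arbitrary
convex combinations.
-/

open MeasureTheory ENNReal NNReal Filter Topology Set

def contractionC (α x : ℝ) : ℝ := max (-α - x) (min x (α - x))

theorem lipschitzWith_contractionC (α : ℝ) : LipschitzWith 1 (contractionC α) := by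
  have hsub (c : ℝ) : LipschitzWith 1 (fun x : ℝ => c - x) := by
    simpa using (LipschitzWith.const c).sub LipschitzWith.id
  unfold contractionC
  simpa using (hsub (-α)).max (LipschitzWith.id.min (hsub α))

theorem contractionC_zero {α : ℝ} (hα : 0 ≤ α) : contractionC α 0 = 0 := by
  simp [contractionC, hα]

theorem abs_contractionC_two_mul_le {β x : ℝ} (hx : |x| ≤ 3 * β) :
    |contractionC (2 * β) x| ≤ β := by
  rw [abs_le] at hx ⊢
  unfold contractionC
  constructor
  · rcases le_total x (-β) with h | h
    · exact le_max_of_le_left (by linarith)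
    · exact le_max_of_le_right (le_min h (by linarith))
  · refine max_le (by linarith) ?_
    rcases le_total x β with h | h
    · exact (min_le_left _ _).trans h
    · exact (min_le_right _ _).trans (by linarith)

-- `contractionChain β k = C_{2β/3^(k-1)} ∘ ⋯ ∘ C_{2β}`, so the paper's `Dₙ` is
-- `contractionChain (3 ^ n) (2 * n + 1)`.
noncomputable def contractionChain (β : ℝ) : ℕ → ℝ → ℝ
  | 0 => id
  | k + 1 => contractionC (2 * (β / 3 ^ k)) ∘ contractionChain β k

theorem lipschitzWith_contractionChain (β : ℝ) (k : ℕ) :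
    LipschitzWith 1 (contractionChain β k) := by
  induction k with
  | zero => exact LipschitzWith.id
  | succ k ih =>
    show LipschitzWith 1 (contractionC _ ∘ contractionChain β k)
    simpa using (lipschitzWith_contractionC _).comp ih

theorem contractionChain_zero {β : ℝ} (hβ : 0 ≤ β) (k : ℕ) : contractionChain β k 0 = 0 := by
  induction k with
  | zero => rfl
  | succ k ih =>
    simpa [contractionChain, ih] using contractionC_zero (by positivity)

theorem abs_contractionChain_le {β y : ℝ} (hy : |y| ≤ 3 * β) (k : ℕ) :
    |contractionChain β k y| ≤ 3 * (β / 3 ^ k) := by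
  induction k with
  | zero => simpa [contractionChain] using hy
  | succ k ih =>
    calc |contractionChain β (k + 1) y| ≤ β / 3 ^ k := abs_contractionC_two_mul_le ih
      _ = 3 * (β / 3 ^ (k + 1)) := by rw [pow_succ]; field_simp

theorem tendsto_contractionChain (y : ℝ) :
    Tendsto (fun n => contractionChain (3 ^ n) (2 * n + 1) y) atTop (𝓝 0) := by
  have hpow : Tendsto (fun n : ℕ => (3 : ℝ) ^ n) atTop atTop :=
    tendsto_pow_atTop_atTop_of_one_lt (by norm_num)
  refine squeeze_zero_norm' ?_ (tendsto_inv_atTop_zero.comp hpow)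
  filter_upwards [hpow.eventually_ge_atTop |y|] with n hn
  have hy : |y| ≤ 3 * 3 ^ n := by linarith [abs_nonneg y]
  calc ‖contractionChain (3 ^ n) (2 * n + 1) y‖ ≤ 3 * (3 ^ n / 3 ^ (2 * n + 1)) :=
        abs_contractionChain_le hy _
    _ = ((3 : ℝ) ^ n)⁻¹ := by rw [pow_succ, two_mul, pow_add]; field_simp

theorem LowerSemicontinuous.isClosed_setOf_le {α β : Type*} [TopologicalSpace α] [LinearOrder β]
    [DenselyOrdered β] [TopologicalSpace β] [OrderTopology β] {f g : α → β}
    (hf : LowerSemicontinuous f) (hg : Continuous g) : IsClosed {x | f x ≤ g x} := by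
  rw [← isOpen_compl_iff, isOpen_iff_mem_nhds]
  intro x hx
  obtain ⟨c, hgc, hcf⟩ := exists_between (not_le.mp hx)
  filter_upwards [hg.continuousAt.eventually (gt_mem_nhds hgc), hf x c hcf] with y hgy hfy
  exact not_le.mpr (hgy.trans hfy)

section MidpointConvex

variable {φ : ℝ → ℝ≥0∞}

theorem le_chord_midpoint {s t : ℝ} {a b : ℝ≥0∞} (hs : s ∈ Icc (0 : ℝ) 1) (ht : t ∈ Icc (0 : ℝ) 1)
    (hmid : φ ((s + t) / 2) + φ ((s + t) / 2) ≤ φ s + φ t)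
    (Hs : φ s ≤ ENNReal.ofReal s * a + ENNReal.ofReal (1 - s) * b)
    (Ht : φ t ≤ ENNReal.ofReal t * a + ENNReal.ofReal (1 - t) * b) :
    φ ((s + t) / 2) ≤
      ENNReal.ofReal ((s + t) / 2) * a + ENNReal.ofReal (1 - (s + t) / 2) * b := by
  have hsum {x y : ℝ} (hx : 0 ≤ x) (hy : 0 ≤ y) :
      ENNReal.ofReal x + ENNReal.ofReal y = 2 * ENNReal.ofReal ((x + y) / 2) := by
    rw [← ENNReal.ofReal_add hx hy, ← ENNReal.ofReal_ofNat 2, ← ENNReal.ofReal_mul (by norm_num)]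
    ring_nf
  have key : 2 * φ ((s + t) / 2) ≤
      2 * (ENNReal.ofReal ((s + t) / 2) * a + ENNReal.ofReal (1 - (s + t) / 2) * b) :=
    calc 2 * φ ((s + t) / 2) = φ ((s + t) / 2) + φ ((s + t) / 2) := two_mul _
      _ ≤ φ s + φ t := hmid
      _ ≤ _ + _ := add_le_add Hs Ht
      _ = (ENNReal.ofReal s + ENNReal.ofReal t) * a
          + (ENNReal.ofReal (1 - s) + ENNReal.ofReal (1 - t)) * b := by ring
      _ = _ := by
        rw [hsum hs.1 ht.1, hsum (sub_nonneg.2 hs.2) (sub_nonneg.2 ht.2)]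
        ring_nf
  exact (ENNReal.mul_le_mul_iff_right two_ne_zero ofNat_ne_top).mp key

theorem le_chord_of_dyadic
    (hmid : ∀ s ∈ Icc (0 : ℝ) 1, ∀ t ∈ Icc (0 : ℝ) 1,
      φ ((s + t) / 2) + φ ((s + t) / 2) ≤ φ s + φ t) (n k : ℕ) (hk : k ≤ 2 ^ n) :
    φ (k / 2 ^ n) ≤ ENNReal.ofReal (k / 2 ^ n) * φ 1 + ENNReal.ofReal (1 - k / 2 ^ n) * φ 0 := by
  have hmem {m : ℕ} (n : ℕ) (hm : m ≤ 2 ^ n) : (m : ℝ) / 2 ^ n ∈ Icc (0 : ℝ) 1 :=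
    ⟨by positivity, div_le_one_of_le₀ (by exact_mod_cast hm) (by positivity)⟩
  induction n generalizing k with
  | zero =>
    obtain rfl | rfl : k = 0 ∨ k = 1 := by omega
    all_goals simp
  | succ n ih =>
    have hk₁ : k / 2 ≤ 2 ^ n := by rw [pow_succ] at hk; omega
    have hk₂ : (k + 1) / 2 ≤ 2 ^ n := by rw [pow_succ] at hk; omega
    have hsplit :
        ((k / 2 : ℕ) / 2 ^ n + ((k + 1) / 2 : ℕ) / 2 ^ n) / 2 = (k : ℝ) / 2 ^ (n + 1) := by
      have hk : ((k / 2 : ℕ) : ℝ) + ((k + 1) / 2 : ℕ) = k := by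
        exact_mod_cast (by omega : k / 2 + (k + 1) / 2 = k)
      rw [← add_div, hk, pow_succ, div_div]
    rw [← hsplit]
    exact le_chord_midpoint (hmem n hk₁) (hmem n hk₂)
      (hmid _ (hmem n hk₁) _ (hmem n hk₂)) (ih _ hk₁) (ih _ hk₂)

theorem LowerSemicontinuous.le_chord_of_midpoint (hφ : LowerSemicontinuous φ)
    (hmid : ∀ s ∈ Icc (0 : ℝ) 1, ∀ t ∈ Icc (0 : ℝ) 1,
      φ ((s + t) / 2) + φ ((s + t) / 2) ≤ φ s + φ t) {t : ℝ} (ht : t ∈ Icc (0 : ℝ) 1) :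
    φ t ≤ ENNReal.ofReal t * φ 1 + ENNReal.ofReal (1 - t) * φ 0 := by
  rcases ht.1.eq_or_lt with rfl | ht₀
  · simp
  rcases ht.2.eq_or_lt with rfl | ht₁
  · simp
  by_cases hφ₁ : φ 1 = ⊤
  · simp [hφ₁, ENNReal.mul_top (ENNReal.ofReal_pos.2 ht₀).ne']
  by_cases hφ₀ : φ 0 = ⊤
  · simp [hφ₀, ENNReal.mul_top (ENNReal.ofReal_pos.2 (sub_pos.2 ht₁)).ne']
  have hclosed : IsClosed {s | φ s ≤ ENNReal.ofReal s * φ 1 + ENNReal.ofReal (1 - s) * φ 0} :=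
    hφ.isClosed_setOf_le <|
      ((ENNReal.continuous_mul_const hφ₁).comp ENNReal.continuous_ofReal).add
        ((ENNReal.continuous_mul_const hφ₀).comp
          (ENNReal.continuous_ofReal.comp (continuous_const.sub continuous_id)))
  have hdyadic : Tendsto (fun n : ℕ => (⌊t * 2 ^ n⌋₊ : ℝ) / 2 ^ n) atTop (𝓝 t) :=
    (tendsto_nat_floor_mul_div_atTop ht.1).comp
      (tendsto_pow_atTop_atTop_of_one_lt one_lt_two)
  refine hclosed.mem_of_tendsto hdyadic (Eventually.of_forall fun n => ?_)
  refine le_chord_of_dyadic hmid n _ (Nat.floor_le_of_le ?_)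
  push_cast
  exact mul_le_of_le_one_left (by positivity) ht.2

end MidpointConvex

section Lp

variable {X : Type*} [MeasurableSpace X] {μ : Measure X} {p : ℝ≥0∞}

theorem tendsto_eLpNorm_zero_of_dominated {E : Type*} [NormedAddCommGroup E]
    (hp₀ : p ≠ 0) (hp : p ≠ ∞) {F : ℕ → X → E} {bound : X → ℝ}
    (hF : ∀ n, AEStronglyMeasurable (F n) μ) (hbound : MemLp bound p μ)
    (hle : ∀ n, ∀ᵐ x ∂μ, ‖F n x‖ ≤ bound x)
    (hlim : ∀ᵐ x ∂μ, Tendsto (fun n => F n x) atTop (𝓝 0)) :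
    Tendsto (fun n => eLpNorm (F n) p μ) atTop (𝓝 0) := by
  have hq : 0 < p.toReal := ENNReal.toReal_pos hp₀ hp
  have hrpow {r : ℝ} (hr : 0 < r) : Tendsto (fun x : ℝ≥0∞ => x ^ r) (𝓝 0) (𝓝 0) := by
    simpa [hr] using (ENNReal.continuous_rpow_const (y := r)).tendsto (0 : ℝ≥0∞)
  have hintegral : Tendsto (fun n => ∫⁻ x, ‖F n x‖ₑ ^ p.toReal ∂μ) atTop (𝓝 0) := by
    rw [← lintegral_zero]
    refine tendsto_lintegral_of_dominated_convergence' (fun x => ‖bound x‖ₑ ^ p.toReal)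
      (fun n => (hF n).enorm.pow_const p.toReal)
      (fun n => by
        filter_upwards [hle n] with x hx
        exact ENNReal.rpow_le_rpow (enorm_le_iff_norm_le.2 (hx.trans (Real.le_norm_self _))) hq.le)
      (lintegral_rpow_enorm_lt_top_of_eLpNorm_lt_top hp₀ hp hbound.eLpNorm_lt_top).ne
      (by
        filter_upwards [hlim] with x hx
        exact (hrpow hq).comp (by simpa using hx.enorm))
  simp_rw [eLpNorm_eq_eLpNorm' hp₀ hp, eLpNorm']
  exact (hrpow (one_div_pos.2 hq)).comp hintegral

theorem LipschitzWith.tendsto_compLp {E F : Type*} [NormedAddCommGroup E] [NormedAddCommGroup F]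
    [Fact (1 ≤ p)] (hp : p ≠ ∞) {K : ℝ≥0} {φs : ℕ → E → F} {φ : E → F}
    (hφs : ∀ n, LipschitzWith K (φs n)) (hφs0 : ∀ n, φs n 0 = 0)
    (hφ : LipschitzWith K φ) (hφ0 : φ 0 = 0)
    (hlim : ∀ x, Tendsto (fun n => φs n x) atTop (𝓝 (φ x))) (g : Lp E p μ) :
    Tendsto (fun n => (hφs n).compLp (hφs0 n) g) atTop (𝓝 (hφ.compLp hφ0 g)) := by
  rw [Lp.tendsto_Lp_iff_tendsto_eLpNorm']
  have hcongr (n : ℕ) : eLpNorm (⇑((hφs n).compLp (hφs0 n) g) - ⇑(hφ.compLp hφ0 g)) p μ =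
      eLpNorm (fun x => φs n (g x) - φ (g x)) p μ := by
    refine eLpNorm_congr_ae ?_
    filter_upwards [(hφs n).coeFn_compLp (hφs0 n) g, hφ.coeFn_compLp hφ0 g] with x h₁ h₂
    simp [h₁, h₂]
  simp_rw [hcongr]
  refine tendsto_eLpNorm_zero_of_dominated (bound := fun x => 2 * K * ‖g x‖)
    (zero_lt_one.trans_le Fact.out).ne' hp
    (fun n => ((hφs n).continuous.comp_aestronglyMeasurable (Lp.aestronglyMeasurable g)).sub
      (hφ.continuous.comp_aestronglyMeasurable (Lp.aestronglyMeasurable g)))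
    ((Lp.memLp g).norm.const_mul _) (fun n => Eventually.of_forall fun x => ?_)
    (Eventually.of_forall fun x => by simpa using (hlim (g x)).sub_const (φ (g x)))
  calc ‖φs n (g x) - φ (g x)‖ ≤ ‖φs n (g x)‖ + ‖φ (g x)‖ := _root_.norm_sub_le _ _
    _ ≤ K * ‖g x‖ + K * ‖g x‖ :=
        add_le_add ((hφs n).norm_le_mul (hφs0 n) _) (hφ.norm_le_mul hφ0 _)
    _ = 2 * K * ‖g x‖ := by ring

theorem LipschitzWith.compLp_comp {E F G : Type*} [NormedAddCommGroup E] [NormedAddCommGroup F]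
    [NormedAddCommGroup G] {K K' K'' : ℝ≥0} {φ : F → G} {ψ : E → F}
    (hφ : LipschitzWith K φ) (hφ0 : φ 0 = 0) (hψ : LipschitzWith K' ψ) (hψ0 : ψ 0 = 0)
    (hφψ : LipschitzWith K'' (φ ∘ ψ)) (hφψ0 : (φ ∘ ψ) 0 = 0) (g : Lp E p μ) :
    hφψ.compLp hφψ0 g = hφ.compLp hφ0 (hψ.compLp hψ0 g) := by
  refine Lp.ext ?_
  filter_upwards [hφψ.coeFn_compLp hφψ0 g, hφ.coeFn_compLp hφ0 (hψ.compLp hψ0 g),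
    hψ.coeFn_compLp hψ0 g] with x h₁ h₂ h₃
  simp [h₁, h₂, h₃]

def CompatibleWith (E : Lp ℝ p μ → ℝ≥0∞) (φ : ℝ → ℝ) : Prop :=
  ∀ (h : LipschitzWith 1 φ) (h0 : φ 0 = 0) (f g : Lp ℝ p μ),
    E (f + h.compLp h0 g) + E (f - h.compLp h0 g) ≤ E (f + g) + E (f - g)

namespace CompatibleWith

variable {E : Lp ℝ p μ → ℝ≥0∞}

theorem comp {φ ψ : ℝ → ℝ} (hφ : CompatibleWith E φ) (hψ : CompatibleWith E ψ)
    (hφL : LipschitzWith 1 φ) (hφ0 : φ 0 = 0) (hψL : LipschitzWith 1 ψ) (hψ0 : ψ 0 = 0) :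
    CompatibleWith E (φ ∘ ψ) := fun h h0 f g => by
  rw [LipschitzWith.compLp_comp hφL hφ0 hψL hψ0]
  exact (hφ hφL hφ0 f _).trans (hψ hψL hψ0 f g)

theorem of_tendsto [Fact (1 ≤ p)] (hp : p ≠ ∞) (hE : LowerSemicontinuous E) {φs : ℕ → ℝ → ℝ}
    {φ : ℝ → ℝ} (hφs : ∀ n, CompatibleWith E (φs n)) (hφsL : ∀ n, LipschitzWith 1 (φs n))
    (hφs0 : ∀ n, φs n 0 = 0) (hlim : ∀ x, Tendsto (fun n => φs n x) atTop (𝓝 (φ x))) :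
    CompatibleWith E φ := fun h h0 f g => by
  have hclosed : IsClosed {z : Lp ℝ p μ | E (f + z) + E (f - z) ≤ E (f + g) + E (f - g)} :=
    ((hE.comp (continuous_const_add f)).add (hE.comp (continuous_sub_left f))).isClosed_preimage _
  exact hclosed.mem_of_tendsto (LipschitzWith.tendsto_compLp hp hφsL hφs0 h h0 hlim g)
    (Eventually.of_forall fun n => hφs n (hφsL n) (hφs0 n) f g)

theorem add_self_le (hE : CompatibleWith E fun _ => 0) (f g : Lp ℝ p μ) :
    E f + E f ≤ E (f + g) + E (f - g) := by
  have hL : LipschitzWith 1 fun _ : ℝ => (0 : ℝ) := LipschitzWith.const' 0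
  have hzero : hL.compLp rfl g = 0 := Lp.eq_zero_iff_ae_eq_zero.2 (hL.coeFn_compLp rfl g)
  simpa [hzero] using hE hL rfl f g

end CompatibleWith

theorem compatibleWith_contractionChain {E : Lp ℝ p μ → ℝ≥0∞}
    (hC : ∀ α : ℝ, 0 ≤ α → CompatibleWith E (contractionC α)) {β : ℝ} (hβ : 0 ≤ β) (k : ℕ) :
    CompatibleWith E (contractionChain β k) := by
  induction k with
  | zero =>
    intro h h0 f g
    rw [show h.compLp h0 g = g from Lp.ext (h.coeFn_compLp h0 g)]
  | succ k ih =>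
    have hα : 0 ≤ 2 * (β / 3 ^ k) := by positivity
    exact (hC _ hα).comp ih (lipschitzWith_contractionC _) (contractionC_zero hα)
      (lipschitzWith_contractionChain β k) (contractionChain_zero hβ k)

end Lp

theorem convex_of_compatible_abs_and_Calpha_general {X : Type*} [MeasurableSpace X]
    (μ : Measure X) (E : Lp ℝ 2 μ → ℝ≥0∞) (hE : LowerSemicontinuous E)
    (hCα : ∀ α : ℝ, 0 ≤ α →
      ∀ (h : LipschitzWith 1 (fun x : ℝ => max (-α - x) (min x (α - x))))
        (h0 : (fun x : ℝ => max (-α - x) (min x (α - x))) 0 = 0),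
      ∀ f g : Lp ℝ 2 μ,
        E (f + h.compLp h0 g) + E (f - h.compLp h0 g) ≤ E (f + g) + E (f - g)) :
    ∀ f g : Lp ℝ 2 μ, ∀ t : ℝ, 0 ≤ t → t ≤ 1 →
      E (t • f + (1 - t) • g) ≤ ENNReal.ofReal t * E f + ENNReal.ofReal (1 - t) * E g := by
  intro f g t ht₀ ht₁
  have hzero : CompatibleWith E fun _ => 0 :=
    CompatibleWith.of_tendsto ENNReal.ofNat_ne_top hE
      (fun n => compatibleWith_contractionChain hCα (by positivity) _)
      (fun n => lipschitzWith_contractionChain _ _)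
      (fun n => contractionChain_zero (by positivity) _)
      tendsto_contractionChain
  have hφ : LowerSemicontinuous fun s : ℝ => E (s • f + (1 - s) • g) := hE.comp (by fun_prop)
  refine (hφ.le_chord_of_midpoint (fun s _ s' _ => ?_) ⟨ht₀, ht₁⟩).trans_eq (by simp)
  have hmid := hzero.add_self_le (((s + s') / 2) • f + (1 - (s + s') / 2) • g)
    (((s - s') / 2) • (f - g))
  convert hmid using 3 <;> module

theorem convex_of_compatible_abs_and_Calpha {X : Type*} [MeasurableSpace X]
    (μ : Measure X) (E : Lp ℝ 2 μ → ℝ≥0∞) (hE : LowerSemicontinuous E)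
    (habs : ∀ (h : LipschitzWith 1 (fun x : ℝ => |x|))
        (h0 : (fun x : ℝ => |x|) 0 = 0),
      ∀ f g : Lp ℝ 2 μ,
        E (f + h.compLp h0 g) + E (f - h.compLp h0 g) ≤ E (f + g) + E (f - g))
    (hCα : ∀ α : ℝ, 0 ≤ α →
      ∀ (h : LipschitzWith 1 (fun x : ℝ => max (-α - x) (min x (α - x))))
        (h0 : (fun x : ℝ => max (-α - x) (min x (α - x))) 0 = 0),
      ∀ f g : Lp ℝ 2 μ,
        E (f + h.compLp h0 g) + E (f - h.compLp h0 g) ≤ E (f + g) + E (f - g)) :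
    ∀ f g : Lp ℝ 2 μ, ∀ t : ℝ, 0 ≤ t → t ≤ 1 →
      E (t • f + (1 - t) • g) ≤ ENNReal.ofReal t * E f + ENNReal.ofReal (1 - t) * E g :=
  convex_of_compatible_abs_and_Calpha_general μ E hE hCα
end
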